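/- arXiv:1301.0948 — 3 statements merged into one kernel-verified Lean document; each statement's English description precedes it below -/
import Mathlib

section
/- Let t > 1 be a real number and let 𝒫 be a finite set of primes. Suppose that (i) for every proper subset 𝒬 ⊊ 𝒫 and every natural number k ≥ 1, the primitive set ℕ_k(𝒬) is t-best among all primitive subsets of ℕ_{≥k}(𝒬); and (ii) the inequality ∑_{n∈ℕ_k(𝒫)} n^{−t} ≥ ∑_{n∈ℕ_{k+1}(𝒫)} n^{−t} holds for all natural numbers k ≥ 1. Then for every natural number k ≥ 1, the set ℕ_k(𝒫) is t-best among all primitive subsets of ℕ_{≥k}(𝒫). -/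
/-!
For a finite primitive `S ⊆ ℕ_{≥k}(P)` we induct on the largest `Ω(n)`, `n ∈ S`. If `k ≥ 2`, pick
a prime `q ∈ P` dividing an element of `S`. The elements of `S` prime to `q` form a primitive
subset of `ℕ_{≥k}(P \ {q})`, and the others are `q` times a primitive subset of `ℕ_{≥k-1}(P)`
with smaller maximal `Ω`; this matches `ℕ_k(P) = ℕ_k(P \ {q}) ⊔ q ℕ_{k-1}(P)`. If `k = 1`, the
set `X` of primes in `S` is coprime to the other elements of `S`, which therefore lie in
`ℕ_{≥1}(P \ X)`; if `X` is empty then `S ⊆ ℕ_{≥2}(P)` and (ii) for `k = 1` concludes.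
An infinite `S` is exhausted by its finite subsets.
-/

/-- A nonempty set of natural numbers is *primitive* if no element of the set divides
another element of the set; the singleton set `{1}` is not considered primitive. -/
def Primitive (S : Set ℕ) : Prop :=
  S.Nonempty ∧ S ≠ {1} ∧ ∀ a ∈ S, ∀ b ∈ S, a ∣ b → a = b

/-- `NSet P` is the set `ℕ(P)` of natural numbers all of whose prime factors lie in `P`
(the multiplicative semigroup generated by `P`, which contains `1`). -/
def NSet (P : Set ℕ) : Set ℕ :=
  {n : ℕ | 0 < n ∧ ∀ p : ℕ, p.Prime → p ∣ n → p ∈ P}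

/-- `NkSet P k = ℕ_k(P)`: the elements of `ℕ(P)` with exactly `k` prime factors
counted with multiplicity. -/
def NkSet (P : Set ℕ) (k : ℕ) : Set ℕ :=
  {n ∈ NSet P | n.primeFactorsList.length = k}

/-- `NgeSet P k = ℕ_{≥k}(P)`: the elements of `ℕ(P)` with at least `k` prime factors
counted with multiplicity. -/
def NgeSet (P : Set ℕ) (k : ℕ) : Set ℕ :=
  {n ∈ NSet P | k ≤ n.primeFactorsList.length}

open ArithmeticFunction ArithmeticFunction.Omega

noncomputable def invPowSum (t : ℝ) (S : Set ℕ) : ℝ :=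
  ∑' n : S, (n : ℝ) ^ (-t)

/-- The inequality part of "`A` is `t`-best among the primitive subsets of `U`"; `A` itself is
not required to be a primitive subset of `U`. -/
def IsTBestAmong (t : ℝ) (U A : Set ℕ) : Prop :=
  ∀ S ⊆ U, Primitive S → invPowSum t S ≤ invPowSum t A

section invPowSum

variable {t : ℝ}

lemma summable_rpow_neg (ht : 1 < t) : Summable (fun n : ℕ => (n : ℝ) ^ (-t)) :=
  Real.summable_nat_rpow.mpr (by linarith)

lemma invPowSum_nonneg (S : Set ℕ) : 0 ≤ invPowSum t S :=
  tsum_nonneg fun _ => Real.rpow_nonneg (Nat.cast_nonneg _) _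

@[simp]
lemma invPowSum_empty : invPowSum t ∅ = 0 :=
  tsum_empty

lemma invPowSum_mono (ht : 1 < t) {S T : Set ℕ} (h : S ⊆ T) : invPowSum t S ≤ invPowSum t T :=
  Summable.tsum_le_tsum_of_inj (Set.inclusion h) (Set.inclusion_injective h)
    (fun _ _ => Real.rpow_nonneg (Nat.cast_nonneg _) _) (fun _ => le_rfl)
    ((summable_rpow_neg ht).subtype S) ((summable_rpow_neg ht).subtype T)

lemma invPowSum_union (ht : 1 < t) {S T : Set ℕ} (h : Disjoint S T) :
    invPowSum t (S ∪ T) = invPowSum t S + invPowSum t T :=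
  Summable.tsum_union_disjoint h ((summable_rpow_neg ht).subtype S)
    ((summable_rpow_neg ht).subtype T)

lemma invPowSum_image_mul {q : ℕ} (hq : q ≠ 0) (T : Set ℕ) :
    invPowSum t ((q * ·) '' T) = (q : ℝ) ^ (-t) * invPowSum t T := by
  rw [invPowSum, invPowSum, tsum_image (fun n : ℕ => (n : ℝ) ^ (-t))
    (mul_right_injective₀ hq).injOn, ← tsum_mul_left]
  refine tsum_congr fun m => ?_
  push_cast
  exact Real.mul_rpow (Nat.cast_nonneg _) (Nat.cast_nonneg _)

lemma invPowSum_eq_add_mul (ht : 1 < t) {q : ℕ} (hq : q ≠ 0) (T : Set ℕ) :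
    invPowSum t T =
      invPowSum t {n ∈ T | ¬ q ∣ n} + (q : ℝ) ^ (-t) * invPowSum t ((q * ·) ⁻¹' T) := by
  have hdvd : (q * ·) '' ((q * ·) ⁻¹' T) = {n ∈ T | q ∣ n} := by
    rw [Set.image_preimage_eq_inter_range]
    ext n
    simp [dvd_def, eq_comm]
  rw [← invPowSum_image_mul hq, hdvd, ← invPowSum_union ht]
  · congr 1
    ext n
    by_cases q ∣ n <;> simp [*]
  · exact Set.disjoint_left.mpr fun n h1 h2 => h1.2 h2.2

lemma invPowSum_le_of_forall_finset (ht : 1 < t) {S : Set ℕ} {c : ℝ}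
    (h : ∀ F : Finset ℕ, ↑F ⊆ S → invPowSum t ↑F ≤ c) : invPowSum t S ≤ c := by
  refine ((summable_rpow_neg ht).subtype S).tsum_le_of_sum_le fun F => ?_
  have hF := h (F.map (Function.Embedding.subtype _)) fun n hn => by
    obtain ⟨x, -, rfl⟩ := Finset.mem_map.mp hn
    exact x.2
  rwa [invPowSum, Finset.tsum_subtype' _ (fun n : ℕ => (n : ℝ) ^ (-t)), Finset.sum_map] at hF

end invPowSum

section NSet

variable {P : Set ℕ} {q : ℕ}

lemma mem_NkSet_one {n : ℕ} : n ∈ NkSet P 1 ↔ n.Prime ∧ n ∈ P := by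
  refine ⟨fun ⟨⟨_, hP⟩, h1⟩ => ?_, fun ⟨hn, hnP⟩ => ?_⟩
  · have hn : n.Prime := cardFactors_eq_one_iff_prime.mp h1
    exact ⟨hn, hP n hn dvd_rfl⟩
  · refine ⟨⟨hn.pos, fun p hp hpn => ?_⟩, cardFactors_apply_prime hn⟩
    rwa [(Nat.prime_dvd_prime_iff_eq hp hn).mp hpn]

lemma one_notMem_NgeSet {k : ℕ} (hk : 1 ≤ k) : 1 ∉ NgeSet P k := by
  rintro ⟨-, h⟩
  simp only [Nat.primeFactorsList_one, List.length_nil] at h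
  omega

lemma exists_prime_mem_of_mem_NgeSet {k n : ℕ} (hk : 1 ≤ k) (hn : n ∈ NgeSet P k) :
    ∃ q, q.Prime ∧ q ∈ P := by
  obtain ⟨q, hq, hqn⟩ := Nat.exists_prime_and_dvd fun h : n = 1 => one_notMem_NgeSet hk (h ▸ hn)
  exact ⟨q, hq, hn.1.2 q hq hqn⟩

lemma mem_NSet_sdiff_singleton (hq : q.Prime) {n : ℕ} :
    n ∈ NSet (P \ {q}) ↔ n ∈ NSet P ∧ ¬ q ∣ n := by
  refine ⟨fun ⟨hn, hP⟩ => ⟨⟨hn, fun p hp hpn => (hP p hp hpn).1⟩, fun hqn => ?_⟩,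
    fun ⟨⟨hn, hP⟩, hqn⟩ => ⟨hn, fun p hp hpn => ⟨hP p hp hpn, ?_⟩⟩⟩
  · exact (hP q hq hqn).2 rfl
  · rintro rfl
    exact hqn hpn

lemma mul_mem_NSet_iff (hq : q.Prime) (hqP : q ∈ P) {m : ℕ} :
    q * m ∈ NSet P ↔ m ∈ NSet P := by
  refine ⟨fun ⟨hm, hP⟩ => ⟨Nat.pos_of_mul_pos_left hm, fun p hp hpm => hP p hp
    (hpm.mul_left q)⟩, fun ⟨hm, hP⟩ => ⟨Nat.mul_pos hq.pos hm, fun p hp hpm => ?_⟩⟩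
  rcases hp.dvd_mul.mp hpm with h | h
  · rwa [(Nat.prime_dvd_prime_iff_eq hp hq).mp h]
  · exact hP p hp h

lemma cardFactors_prime_mul (hq : q.Prime) {m : ℕ} (hm : m ∈ NSet P) :
    Ω (q * m) = Ω m + 1 := by
  rw [cardFactors_mul hq.ne_zero hm.1.ne', cardFactors_apply_prime hq, add_comm]

lemma NkSet_sdiff_singleton (hq : q.Prime) (k : ℕ) :
    NkSet (P \ {q}) k = {n ∈ NkSet P k | ¬ q ∣ n} := by
  ext n
  simp only [NkSet, Set.mem_ofPred_eq, mem_NSet_sdiff_singleton hq]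
  tauto

lemma sep_not_dvd_subset_NgeSet (hq : q.Prime) (k : ℕ) :
    {n ∈ NgeSet P k | ¬ q ∣ n} ⊆ NgeSet (P \ {q}) k :=
  fun _ ⟨⟨hn, hk⟩, hqn⟩ => ⟨(mem_NSet_sdiff_singleton hq).mpr ⟨hn, hqn⟩, hk⟩

lemma preimage_mul_NkSet_succ (hq : q.Prime) (hqP : q ∈ P) (k : ℕ) :
    (q * ·) ⁻¹' NkSet P (k + 1) = NkSet P k := by
  ext m
  simp only [NkSet, Set.mem_preimage, Set.mem_ofPred_eq, mul_mem_NSet_iff hq hqP,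
    ← cardFactors_apply]
  refine and_congr_right fun hm => ?_
  rw [cardFactors_prime_mul hq hm]
  omega

lemma preimage_mul_NgeSet_succ_inter (hq : q.Prime) (hqP : q ∈ P) (k B : ℕ) :
    (q * ·) ⁻¹' (NgeSet P (k + 1) ∩ {n | Ω n ≤ B + 1}) = NgeSet P k ∩ {n | Ω n ≤ B} := by
  ext m
  simp only [NgeSet, Set.mem_preimage, Set.mem_inter_iff, Set.mem_ofPred_eq,
    mul_mem_NSet_iff hq hqP, ← cardFactors_apply]
  refine ⟨fun ⟨⟨hm, hk⟩, hB⟩ => ?_, fun ⟨⟨hm, hk⟩, hB⟩ => ?_⟩ <;>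
  · rw [cardFactors_prime_mul hq hm] at *
    exact ⟨⟨hm, by omega⟩, by omega⟩

lemma invPowSum_NkSet_succ {t : ℝ} (ht : 1 < t) (hq : q.Prime) (hqP : q ∈ P) (k : ℕ) :
    invPowSum t (NkSet P (k + 1)) =
      invPowSum t (NkSet (P \ {q}) (k + 1)) + (q : ℝ) ^ (-t) * invPowSum t (NkSet P k) := by
  rw [invPowSum_eq_add_mul ht hq.ne_zero, NkSet_sdiff_singleton hq,
    preimage_mul_NkSet_succ hq hqP]

end NSet

lemma Primitive.isAntichain {S : Set ℕ} (hS : Primitive S) : IsAntichain (· ∣ ·) S :=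
  fun a ha b hb hab hdvd => hab (hS.2.2 a ha b hb hdvd)

lemma IsTBestAmong.le_of_isAntichain {t : ℝ} {U A T : Set ℕ} (h : IsTBestAmong t U A)
    (hU : 1 ∉ U) (hTU : T ⊆ U) (hT : IsAntichain (· ∣ ·) T) : invPowSum t T ≤ invPowSum t A := by
  rcases T.eq_empty_or_nonempty with rfl | hne
  · simpa using invPowSum_nonneg A
  · refine h T hTU ⟨hne, fun h1 => hU (hTU (h1 ▸ rfl)), fun a ha b hb hab => ?_⟩
    by_contra hne
    exact hT ha hb hne hab

section Induction

variable {t : ℝ} {P : Finset ℕ} {B : ℕ}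

lemma isTBestAmong_NgeSet_succ (ht : 1 < t) {j : ℕ} (hj : 1 ≤ j)
    (herase : ∀ q ∈ P, IsTBestAmong t (NgeSet ↑(P.erase q) (j + 1)) (NkSet ↑(P.erase q) (j + 1)))
    (ih : IsTBestAmong t (NgeSet ↑P j ∩ {n | Ω n ≤ B}) (NkSet ↑P j)) :
    IsTBestAmong t (NgeSet ↑P (j + 1) ∩ {n | Ω n ≤ B + 1}) (NkSet ↑P (j + 1)) := by
  intro S hS hprim
  obtain ⟨q, hq, hqP⟩ := exists_prime_mem_of_mem_NgeSet (by omega) (hS hprim.1.some_mem).1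
  rw [invPowSum_eq_add_mul ht hq.ne_zero S, invPowSum_NkSet_succ ht hq hqP, ← Finset.coe_erase]
  gcongr
  · refine (herase q hqP).le_of_isAntichain (one_notMem_NgeSet (by omega)) ?_
      (hprim.isAntichain.subset (Set.sep_subset _ _))
    rw [Finset.coe_erase]
    exact fun n ⟨hn, hqn⟩ => sep_not_dvd_subset_NgeSet hq _ ⟨(hS hn).1, hqn⟩
  · refine ih.le_of_isAntichain (fun h => one_notMem_NgeSet hj h.1) ?_
      (hprim.isAntichain.preimage (mul_right_injective₀ hq.ne_zero) fun _ _ => mul_dvd_mul_left q)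
    rw [← preimage_mul_NgeSet_succ_inter hq hqP]
    exact Set.preimage_mono hS

lemma isTBestAmong_NgeSet_one (ht : 1 < t)
    (hsub : ∀ Q : Finset ℕ, Q ⊂ P → IsTBestAmong t (NgeSet ↑Q 1) (NkSet ↑Q 1))
    (h2 : invPowSum t (NkSet ↑P 2) ≤ invPowSum t (NkSet ↑P 1))
    (htwo : IsTBestAmong t (NgeSet ↑P 2 ∩ {n | Ω n ≤ B}) (NkSet ↑P 2)) :
    IsTBestAmong t (NgeSet ↑P 1 ∩ {n | Ω n ≤ B}) (NkSet ↑P 1) := by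
  classical
  intro S hS hprim
  set X := S ∩ NkSet ↑P 1
  rcases X.eq_empty_or_nonempty with hX | ⟨p, hpS, hp⟩
  · refine (htwo S (fun n hn => ⟨⟨(hS hn).1.1, ?_⟩, (hS hn).2⟩) hprim).trans h2
    have hn1 : n.primeFactorsList.length ≠ 1 := fun h => hX.subset ⟨hn, (hS hn).1.1, h⟩
    have := (hS hn).1.2
    omega
  set Q := P.filter (· ∉ X)
  have hQ : Q ⊂ P := Finset.filter_ssubset.mpr ⟨p, (mem_NkSet_one.mp hp).2, not_not.mpr ⟨hpS, hp⟩⟩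
  have hY : S \ X ⊆ NgeSet ↑Q 1 := by
    rintro y ⟨hyS, hyX⟩
    refine ⟨⟨(hS hyS).1.1.1, fun r hr hry => ?_⟩, (hS hyS).1.2⟩
    refine Finset.mem_filter.mpr ⟨(hS hyS).1.1.2 r hr hry, fun hrX => hyX ?_⟩
    rwa [← hprim.2.2 r hrX.1 y hyS hry]
  have hXQ : Disjoint X (NkSet ↑Q 1) := Set.disjoint_right.mpr fun n hn =>
    (Finset.mem_filter.mp (mem_NkSet_one.mp hn).2).2
  calc invPowSum t S = invPowSum t X + invPowSum t (S \ X) := by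
        rw [← invPowSum_union ht Set.disjoint_sdiff_right,
          Set.union_sdiff_cancel Set.inter_subset_left]
    _ ≤ invPowSum t X + invPowSum t (NkSet ↑Q 1) := by
        gcongr
        exact (hsub Q hQ).le_of_isAntichain (one_notMem_NgeSet le_rfl) hY
          (hprim.isAntichain.subset Set.sdiff_subset)
    _ = invPowSum t (X ∪ NkSet ↑Q 1) := (invPowSum_union ht hXQ).symm
    _ ≤ invPowSum t (NkSet ↑P 1) := invPowSum_mono ht (Set.union_subset Set.inter_subset_right
        fun n hn => ⟨⟨hn.1.1, fun r hr hrn => Finset.filter_subset _ _ (hn.1.2 r hr hrn)⟩, hn.2⟩)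

lemma isTBestAmong_NgeSet_inter_cardFactors_le (ht : 1 < t)
    (h1 : ∀ Q : Finset ℕ, Q ⊂ P → ∀ k : ℕ, 1 ≤ k → IsTBestAmong t (NgeSet ↑Q k) (NkSet ↑Q k))
    (h2 : invPowSum t (NkSet ↑P 2) ≤ invPowSum t (NkSet ↑P 1)) (B : ℕ) :
    ∀ k, 1 ≤ k → IsTBestAmong t (NgeSet ↑P k ∩ {n | Ω n ≤ B}) (NkSet ↑P k) := by
  induction B with
  | zero =>
    intro k hk S hS hprim
    obtain ⟨⟨-, hk'⟩, h0⟩ := hS hprim.1.some_mem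
    simp only [Set.mem_ofPred_eq, ← cardFactors_apply] at hk' h0
    omega
  | succ B ih =>
    have hsucc : ∀ j, 1 ≤ j →
        IsTBestAmong t (NgeSet ↑P (j + 1) ∩ {n | Ω n ≤ B + 1}) (NkSet ↑P (j + 1)) :=
      fun j hj => isTBestAmong_NgeSet_succ ht hj
        (fun q hq => h1 _ (Finset.erase_ssubset hq) _ (by omega)) (ih j hj)
    intro k hk
    obtain rfl | ⟨j, hj, rfl⟩ : k = 1 ∨ ∃ j, 1 ≤ j ∧ k = j + 1 := by
      rcases k with _ | _ | j <;> simp_all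
    · exact isTBestAmong_NgeSet_one ht (fun Q hQ => h1 Q hQ 1 le_rfl) h2 (hsucc 1 le_rfl)
    · exact hsucc j hj

end Induction

theorem induction_step_t_best_general (t : ℝ) (ht : 1 < t) (P : Finset ℕ)
    (h1 : ∀ Q : Finset ℕ, Q ⊂ P → ∀ k : ℕ, 1 ≤ k →
      ∀ S : Set ℕ, S ⊆ NgeSet ↑Q k → Primitive S →
        ∑' n : S, (n : ℝ) ^ (-t) ≤ ∑' n : NkSet ↑Q k, (n : ℝ) ^ (-t))
    (h2 : ∀ k : ℕ, 1 ≤ k →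
      ∑' n : NkSet ↑P (k + 1), (n : ℝ) ^ (-t) ≤ ∑' n : NkSet ↑P k, (n : ℝ) ^ (-t))
    (k : ℕ) (hk : 1 ≤ k)
    (S : Set ℕ) (hS : S ⊆ NgeSet ↑P k) (hprim : Primitive S) :
    ∑' n : S, (n : ℝ) ^ (-t) ≤ ∑' n : NkSet ↑P k, (n : ℝ) ^ (-t) := by
  refine invPowSum_le_of_forall_finset ht fun F hF => ?_
  have hbest := isTBestAmong_NgeSet_inter_cardFactors_le ht h1 (h2 1 le_rfl) (F.sup (Ω ·)) k hk
  exact hbest.le_of_isAntichain (fun h => one_notMem_NgeSet hk h.1)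
    (fun n hn => ⟨hS (hF hn), Finset.le_sup (f := (Ω ·)) hn⟩) (hprim.isAntichain.subset hF)

/-- **Lemma 9 (Banks–Martin).** Let `t > 1` and let `P` be a finite set of primes such
that (i) for every proper subset `Q ⊊ P` and every `k ≥ 1`, `ℕ_k(Q)` is `t`-best among
primitive subsets of `ℕ_{≥k}(Q)`, and (ii) `∑_{n∈ℕ_k(P)} n^{-t} ≥ ∑_{n∈ℕ_{k+1}(P)} n^{-t}`
for all `k ≥ 1`. Then `ℕ_k(P)` is `t`-best among primitive subsets of `ℕ_{≥k}(P)` for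
every `k ≥ 1`. -/
theorem induction_step_t_best (t : ℝ) (ht : 1 < t) (P : Finset ℕ)
    (hP : ∀ p ∈ P, Nat.Prime p)
    (h1 : ∀ Q : Finset ℕ, Q ⊂ P → ∀ k : ℕ, 1 ≤ k →
      ∀ S : Set ℕ, S ⊆ NgeSet ↑Q k → Primitive S →
        ∑' n : S, (n : ℝ) ^ (-t) ≤ ∑' n : NkSet ↑Q k, (n : ℝ) ^ (-t))
    (h2 : ∀ k : ℕ, 1 ≤ k →
      ∑' n : NkSet ↑P (k + 1), (n : ℝ) ^ (-t) ≤ ∑' n : NkSet ↑P k, (n : ℝ) ^ (-t))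
    (k : ℕ) (hk : 1 ≤ k)
    (S : Set ℕ) (hS : S ⊆ NgeSet ↑P k) (hprim : Primitive S) :
    ∑' n : S, (n : ℝ) ^ (-t) ≤ ∑' n : NkSet ↑P k, (n : ℝ) ^ (-t) :=
  induction_step_t_best_general t ht P h1 h2 k hk S hS hprim
end

section
/- Let m ≥ 1, let (x₁,…,x_m) be an m-tuple of nonnegative real numbers, and let k ≥ 1 be a natural number. Then h_{k+1}(x₁,…,x_m)² ≥ h_k(x₁,…,x_m) · h_{k+2}(x₁,…,x_m); that is, the sequence of complete homogeneous symmetric polynomials evaluated at nonnegative reals is log-concave. -/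
/-!
Removing the last variable `t = x_{m+1}` gives the recursion
`h_{n+1}(x, t) = h_{n+1}(x) + t · h_n(x, t)`, i.e. `(h_n(x, t))_n` is the convolution of
`(h_n(x))_n` with the geometric sequence `(tⁿ)_n`. For nonnegative sequences, log-concavity
without internal zeros (`a_i a_{j+1} ≤ a_{i+1} a_j` for all `i ≤ j`) is preserved by this
convolution, and `(h_n)_n` in no variables is `1, 0, 0, …`; induction on `m` concludes.
-/

open Finset

/-- `hpoly m k x` is the complete homogeneous symmetric polynomial
`h_k(x₁,…,x_m) = ∑_{1 ≤ j₁ ≤ ⋯ ≤ j_k ≤ m} x_{j₁} ⋯ x_{j_k}`, the sum being over all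
nondecreasing `k`-tuples of indices (equivalently, all multisets of size `k`). -/
noncomputable def hpoly (m k : ℕ) (x : Fin m → ℝ) : ℝ :=
  ∑ f : {f : Fin k → Fin m // Monotone f}, ∏ i : Fin k, x (f.1 i)

/-- Log-concavity without internal zeros; for nonnegative sequences this is the Pólya
frequency condition PF₂. -/
def StronglyLogConcave (a : ℕ → ℝ) : Prop :=
  ∀ ⦃i j : ℕ⦄, i ≤ j → a i * a (j + 1) ≤ a (i + 1) * a j

namespace StronglyLogConcave

variable {a : ℕ → ℝ}

theorem mul_le_sq (ha : StronglyLogConcave a) (k : ℕ) : a k * a (k + 2) ≤ a (k + 1) ^ 2 := by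
  simpa [sq] using ha (Nat.le_succ k)

theorem mul_add_le_add_mul (ha : StronglyLogConcave a) (d : ℕ) :
    ∀ ⦃i j : ℕ⦄, i ≤ j → a i * a (j + d) ≤ a (i + d) * a j := by
  induction d with
  | zero => intro i j _; rfl
  | succ d ih =>
    intro i j hij
    rcases hij.eq_or_lt with rfl | hlt
    · rw [mul_comm]
    · calc a i * a (j + (d + 1)) ≤ a (i + 1) * a (j + d) := ha (hij.trans (Nat.le_add_right j d))
        _ ≤ a (i + 1 + d) * a j := ih hlt
        _ = a (i + (d + 1)) * a j := by rw [add_right_comm, add_assoc]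

section GeometricConvolution

variable {c : ℕ → ℝ} {t : ℝ}

theorem le_of_geom_conv (ha0 : ∀ n, 0 ≤ a n) (ht : 0 ≤ t) (hc0 : c 0 = a 0)
    (hc : ∀ n, c (n + 1) = a (n + 1) + t * c n) (n : ℕ) : a n ≤ c n := by
  induction n with
  | zero => exact hc0.ge
  | succ n ih =>
    rw [hc]
    exact le_add_of_nonneg_right (mul_nonneg ht ((ha0 n).trans ih))

/-- `c / a` is nondecreasing even against shifts of `a`; the shift `d` is what lets the
induction on `i` go through. -/
theorem mul_geom_conv_le (ha : StronglyLogConcave a) (ha0 : ∀ n, 0 ≤ a n) (ht : 0 ≤ t)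
    (hc0 : c 0 = a 0) (hc : ∀ n, c (n + 1) = a (n + 1) + t * c n) :
    ∀ ⦃i j : ℕ⦄ (d : ℕ), i ≤ j → a (j + d) * c i ≤ a (i + d) * c j := by
  intro i
  induction i with
  | zero =>
    intro j d _
    calc a (j + d) * c 0 = a 0 * a (j + d) := by rw [hc0, mul_comm]
      _ ≤ a (0 + d) * a j := ha.mul_add_le_add_mul d (Nat.zero_le j)
      _ ≤ a (0 + d) * c j :=
        mul_le_mul_of_nonneg_left (le_of_geom_conv ha0 ht hc0 hc j) (ha0 _)
  | succ i ih =>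
    rintro (_ | j) d hij
    · omega
    have hfirst : a (i + 1) * a (j + (d + 1)) ≤ a (i + (d + 1)) * a (j + 1) := by
      have := ha.mul_add_le_add_mul d hij
      rwa [add_right_comm j, add_right_comm i, add_assoc, add_assoc] at this
    have hsecond : a (j + (d + 1)) * c i ≤ a (i + (d + 1)) * c j := ih (d + 1) (by omega)
    rw [add_right_comm j, add_right_comm i, add_assoc, add_assoc]
    calc a (j + (d + 1)) * c (i + 1)
        = a (i + 1) * a (j + (d + 1)) + t * (a (j + (d + 1)) * c i) := by rw [hc]; ring
      _ ≤ a (i + (d + 1)) * a (j + 1) + t * (a (i + (d + 1)) * c j) :=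
        add_le_add hfirst (mul_le_mul_of_nonneg_left hsecond ht)
      _ = a (i + (d + 1)) * c (j + 1) := by rw [hc]; ring

theorem geom_conv (ha : StronglyLogConcave a) (ha0 : ∀ n, 0 ≤ a n) (ht : 0 ≤ t)
    (hc0 : c 0 = a 0) (hc : ∀ n, c (n + 1) = a (n + 1) + t * c n) : StronglyLogConcave c := by
  intro i j hij
  have key := ha.mul_geom_conv_le ha0 ht hc0 hc 1 hij
  calc c i * c (j + 1) = a (j + 1) * c i + t * (c i * c j) := by rw [hc]; ring
    _ ≤ a (i + 1) * c j + t * (c i * c j) := by gcongr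
    _ = c (i + 1) * c j := by rw [hc]; ring

end GeometricConvolution

end StronglyLogConcave

abbrev MonotoneTuple (k m : ℕ) : Type := {f : Fin k → Fin m // Monotone f}

theorem Fin.monotone_snoc_last {k m : ℕ} {g : Fin k → Fin (m + 1)} (hg : Monotone g) :
    Monotone (Fin.snoc g (Fin.last m) : Fin (k + 1) → Fin (m + 1)) := by
  intro i j hij
  induction j using Fin.lastCases with
  | last => simp [Fin.le_last]
  | cast j =>
    induction i using Fin.lastCases with
    | last => exact absurd (hij.trans_lt (Fin.castSucc_lt_last j)) (lt_irrefl _)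
    | cast i =>
      simpa only [Fin.snoc_castSucc] using hg (Fin.castSucc_le_castSucc_iff.mp hij)

namespace MonotoneTuple

variable {k m : ℕ}

def castSucc (g : MonotoneTuple (k + 1) m) : MonotoneTuple (k + 1) (m + 1) :=
  ⟨Fin.castSucc ∘ g.1, Fin.strictMono_castSucc.monotone.comp g.2⟩

def snocLast (g : MonotoneTuple k (m + 1)) : MonotoneTuple (k + 1) (m + 1) :=
  ⟨Fin.snoc g.1 (Fin.last m), Fin.monotone_snoc_last g.2⟩

/-- A nondecreasing tuple in `Fin (m + 1)` either avoids `last m` or ends with it. -/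
theorem bijective_sumElim_castSucc_snocLast :
    Function.Bijective (Sum.elim (castSucc (k := k) (m := m)) snocLast) := by
  refine ⟨Function.Injective.sumElim ?_ ?_ ?_, ?_⟩
  · intro g g' h
    exact Subtype.ext (funext fun i =>
      Fin.castSucc_injective m (congrFun (congrArg Subtype.val h) i))
  · intro g g' h
    refine Subtype.ext (funext fun i => ?_)
    simpa [snocLast] using congrFun (congrArg Subtype.val h) (Fin.castSucc i)
  · intro g g' h
    have := congrFun (congrArg Subtype.val h) (Fin.last k)
    simp only [castSucc, snocLast, Function.comp_apply, Fin.snoc_last] at this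
    exact (Fin.castSucc_lt_last _).ne this
  · rintro ⟨f, hf⟩
    by_cases hlast : f (Fin.last k) = Fin.last m
    · refine ⟨Sum.inr ⟨Fin.init f, hf.comp Fin.strictMono_castSucc.monotone⟩, ?_⟩
      simp only [Sum.elim_inr, snocLast, ← hlast, Fin.snoc_init_self]
    · have hne : ∀ i, f i ≠ Fin.last m := fun i =>
        ((hf (Fin.le_last i)).trans_lt (lt_of_le_of_ne (Fin.le_last _) hlast)).ne
      exact ⟨Sum.inl ⟨fun i => (f i).castPred (hne i), fun i j hij => hf hij⟩,
        Subtype.ext (funext fun i => Fin.castSucc_castPred _ (hne i))⟩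

end MonotoneTuple

theorem hpoly_nonneg {m : ℕ} (k : ℕ) {x : Fin m → ℝ} (hx : ∀ i, 0 ≤ x i) : 0 ≤ hpoly m k x :=
  sum_nonneg fun _ _ => prod_nonneg fun _ _ => hx _

theorem hpoly_zero_degree (m : ℕ) (x : Fin m → ℝ) : hpoly m 0 x = 1 := by
  rw [hpoly, Fintype.sum_subsingleton _ ⟨Fin.elim0, fun i => i.elim0⟩, Fin.prod_univ_zero]

theorem hpoly_zero_vars (k : ℕ) (x : Fin 0 → ℝ) : hpoly 0 (k + 1) x = 0 := by
  simp [hpoly]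

theorem hpoly_succ_succ (m k : ℕ) (x : Fin (m + 1) → ℝ) :
    hpoly (m + 1) (k + 1) x
      = hpoly m (k + 1) (x ∘ Fin.castSucc) + x (Fin.last m) * hpoly (m + 1) k x := by
  rw [hpoly, ← Fintype.sum_equiv
    (Equiv.ofBijective _ MonotoneTuple.bijective_sumElim_castSucc_snocLast) _ _ fun _ => rfl,
    Fintype.sum_sum_type, hpoly, hpoly, mul_sum]
  congr 1
  refine sum_congr rfl fun g _ => ?_
  simp only [Equiv.ofBijective_apply, Sum.elim_inr, MonotoneTuple.snocLast,
    Fin.prod_univ_castSucc, Fin.snoc_castSucc, Fin.snoc_last]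
  ring

theorem stronglyLogConcave_hpoly (m : ℕ) {x : Fin m → ℝ} (hx : ∀ i, 0 ≤ x i) :
    StronglyLogConcave fun k => hpoly m k x := by
  induction m with
  | zero =>
    intro i j _
    simp only [hpoly_zero_vars j x, mul_zero]
    exact mul_nonneg (hpoly_nonneg _ hx) (hpoly_nonneg _ hx)
  | succ m ih =>
    have hx' : ∀ i, 0 ≤ (x ∘ Fin.castSucc) i := fun i => hx _
    exact (ih hx').geom_conv (fun n => hpoly_nonneg n hx') (hx _)
      (by simp only [hpoly_zero_degree]) (hpoly_succ_succ m · x)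

theorem hpoly_log_concave_general (m : ℕ) (x : Fin m → ℝ) (hx : ∀ i, 0 ≤ x i) (k : ℕ) :
    hpoly m k x * hpoly m (k + 2) x ≤ (hpoly m (k + 1) x) ^ 2 :=
  (stronglyLogConcave_hpoly m hx).mul_le_sq k

/-- Log-concavity of the complete homogeneous symmetric polynomials at nonnegative
arguments: `h_{k+1}(x)² ≥ h_k(x) · h_{k+2}(x)` (a consequence of the Jacobi–Trudi
identity, since `h_{k+1}² − h_k h_{k+2}` is the Schur function for `λ = (k+1,k+1)`). -/
theorem hpoly_log_concave (m : ℕ) (hm : 1 ≤ m) (x : Fin m → ℝ) (hx : ∀ i, 0 ≤ x i)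
    (k : ℕ) (hk : 1 ≤ k) :
    hpoly m k x * hpoly m (k + 2) x ≤ (hpoly m (k + 1) x) ^ 2 :=
  hpoly_log_concave_general m x hx k
end

section
/- Let t > 1 be a real number and let 𝒫 be a finite set of primes satisfying ∑_{p∈𝒫} p^{−t} ≤ 1 + (1 − ∑_{p∈𝒫} p^{−2t})^{1/2}. Then 1 − (1 − ∑_{p∈𝒫} p^{−2t})^{1/2} ≤ ∑_{p∈𝒫} p^{−t}, and consequently ∑_{p∈𝒫} p^{−t} ≥ ∑_{n∈ℕ₂(𝒫)} n^{−t}. -/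
theorem Finset.two_mul_sum_filter_le_mul {ι R : Type*} [LinearOrder ι] [CommSemiring R]
    (s : Finset ι) (f : ι → R) :
    2 * ∑ x ∈ s ×ˢ s with x.1 ≤ x.2, f x.1 * f x.2 = (∑ i ∈ s, f i) ^ 2 + ∑ i ∈ s, f i ^ 2 := by
  have h_swap : ∑ x ∈ s ×ˢ s with x.2 ≤ x.1, f x.1 * f x.2 =
      ∑ x ∈ s ×ˢ s with x.1 ≤ x.2, f x.1 * f x.2 :=
    Finset.sum_nbij' Prod.swap Prod.swap (by simp +contextual) (by simp +contextual)
      (by simp) (by simp) fun _ _ => mul_comm _ _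
  have h_union : {x ∈ s ×ˢ s | x.1 ≤ x.2} ∪ {x ∈ s ×ˢ s | x.2 ≤ x.1} = s ×ˢ s := by
    ext; simp [← and_or_left, le_total]
  have h_inter : {x ∈ s ×ˢ s | x.1 ≤ x.2} ∩ {x ∈ s ×ˢ s | x.2 ≤ x.1} = s.diag := by
    rw [← Finset.filter_and, Finset.diag_eq_filter]; simp only [le_antisymm_iff]
  calc 2 * ∑ x ∈ s ×ˢ s with x.1 ≤ x.2, f x.1 * f x.2
      = ∑ x ∈ s ×ˢ s with x.1 ≤ x.2, f x.1 * f x.2 +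
          ∑ x ∈ s ×ˢ s with x.2 ≤ x.1, f x.1 * f x.2 := by
        rw [two_mul, h_swap]
    _ = ∑ x ∈ s ×ˢ s, f x.1 * f x.2 + ∑ x ∈ s.diag, f x.1 * f x.2 := by
        rw [← Finset.sum_union_inter, h_union, h_inter]
    _ = (∑ i ∈ s, f i) ^ 2 + ∑ i ∈ s, f i ^ 2 := by
        simp [Finset.sum_product, Finset.diag, sq, Finset.sum_mul_sum]

theorem Nat.primeFactorsList_mul_of_le {p q : ℕ} (hp : p.Prime) (hq : q.Prime) (hpq : p ≤ q) :
    (p * q).primeFactorsList = [p, q] := by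
  have hperm := Nat.perm_primeFactorsList_mul hp.ne_zero hq.ne_zero
  rw [Nat.primeFactorsList_prime hp, Nat.primeFactorsList_prime hq] at hperm
  exact List.Perm.eq_of_sortedLE (Nat.primeFactorsList_sorted _)
    (by simp [List.sortedLE_iff_pairwise, hpq]) hperm

theorem Nat.injOn_mul_of_prime_le :
    Set.InjOn (fun x : ℕ × ℕ => x.1 * x.2) {x | x.1.Prime ∧ x.2.Prime ∧ x.1 ≤ x.2} := by
  rintro ⟨a, b⟩ ⟨ha, hb, hab⟩ ⟨c, d⟩ ⟨hc, hd, hcd⟩ h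
  have h := congrArg Nat.primeFactorsList h
  simp only [Nat.primeFactorsList_mul_of_le ha hb hab, Nat.primeFactorsList_mul_of_le hc hd hcd,
    List.cons.injEq, and_true] at h
  rw [h.1, h.2]

theorem NkSet_two_eq_image_mul {P : Finset ℕ} (hP : ∀ p ∈ P, p.Prime) :
    NkSet ↑P 2 = ↑({x ∈ P ×ˢ P | x.1 ≤ x.2}.image fun x => x.1 * x.2) := by
  ext n
  simp only [NkSet, NSet, Set.mem_ofPred_eq, Finset.coe_image, Set.mem_image, Finset.mem_coe,
    Finset.mem_filter, Finset.mem_product, Prod.exists]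
  constructor
  · rintro ⟨⟨hn, hnP⟩, hlen⟩
    obtain ⟨a, b, hab⟩ := List.length_eq_two.mp hlen
    have hmem : ∀ r ∈ [a, b], r ∈ P := fun r hr => by
      rw [← hab] at hr
      exact hnP r (Nat.prime_of_mem_primeFactorsList hr) (Nat.dvd_of_mem_primeFactorsList hr)
    have hsorted := Nat.primeFactorsList_sorted n
    rw [hab, List.sortedLE_iff_pairwise] at hsorted
    refine ⟨a, b, ⟨⟨hmem a (by simp), hmem b (by simp)⟩, by simpa using hsorted⟩, ?_⟩
    simpa [hab] using Nat.prod_primeFactorsList hn.ne'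
  · rintro ⟨p, q, ⟨⟨hpP, hqP⟩, hpq⟩, rfl⟩
    have hp := hP p hpP
    have hq := hP q hqP
    refine ⟨⟨Nat.mul_pos hp.pos hq.pos, fun r hr hrpq => ?_⟩, by
      rw [Nat.primeFactorsList_mul_of_le hp hq hpq]; rfl⟩
    rcases hr.dvd_mul.mp hrpq with h | h
    · rwa [(Nat.prime_dvd_prime_iff_eq hr hp).mp h]
    · rwa [(Nat.prime_dvd_prime_iff_eq hr hq).mp h]

theorem two_mul_tsum_NkSet_two_rpow {P : Finset ℕ} (hP : ∀ p ∈ P, p.Prime) (s : ℝ) :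
    2 * ∑' n : NkSet ↑P 2, (n : ℝ) ^ s =
      (∑ p ∈ P, (p : ℝ) ^ s) ^ 2 + ∑ p ∈ P, ((p : ℝ) ^ s) ^ 2 := by
  have hinj : Set.InjOn (fun x : ℕ × ℕ => x.1 * x.2) ↑{x ∈ P ×ˢ P | x.1 ≤ x.2} := by
    refine Nat.injOn_mul_of_prime_le.mono fun x hx => ?_
    simp only [Finset.coe_filter, Finset.mem_product, Set.mem_ofPred_eq] at hx
    exact ⟨hP _ hx.1.1, hP _ hx.1.2, hx.2⟩
  rw [NkSet_two_eq_image_mul hP, Finset.tsum_subtype' _ fun m : ℕ => (m : ℝ) ^ s,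
    Finset.sum_image hinj, ← Finset.two_mul_sum_filter_le_mul]
  push_cast
  simp only [Real.mul_rpow (Nat.cast_nonneg _) (Nat.cast_nonneg _)]

section QuadraticRoots

variable {S Q : ℝ}

theorem le_one_of_le_one_add_sqrt (hQS : Q ≤ S) (hS : S ≤ 1 + √(1 - Q)) : Q ≤ 1 := by
  by_contra! hQ
  rw [Real.sqrt_eq_zero_of_nonpos (by linarith)] at hS
  linarith

theorem one_sub_sqrt_one_sub_le (hQ₀ : 0 ≤ Q) (hQ : Q ≤ 1) (hQS : Q ≤ S) : 1 - √(1 - Q) ≤ S := by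
  have : 1 - Q ≤ √(1 - Q) := Real.le_sqrt_of_sq_le (by nlinarith)
  linarith

theorem sq_add_le_two_mul_of_le_of_le (hQ : Q ≤ 1) (h₁ : 1 - √(1 - Q) ≤ S)
    (h₂ : S ≤ 1 + √(1 - Q)) : S ^ 2 + Q ≤ 2 * S := by
  have : (S - 1) ^ 2 ≤ 1 - Q := (Real.sq_le (by linarith)).mpr ⟨by linarith, by linarith⟩
  linarith

end QuadraticRoots

/-- From the proof of Proposition 12 (Banks–Martin): if `t > 1` and `P` is a finite set
of primes with `∑_{p∈P} p^{-t} ≤ 1 + (1 - ∑_{p∈P} p^{-2t})^{1/2}`, then also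
`1 - (1 - ∑_{p∈P} p^{-2t})^{1/2} ≤ ∑_{p∈P} p^{-t}`, and consequently
`∑_{p∈P} p^{-t} ≥ ∑_{n∈ℕ₂(P)} n^{-t}`. -/
theorem lower_root_bound_and_N2 (t : ℝ) (ht : 1 < t) (P : Finset ℕ)
    (hP : ∀ p ∈ P, Nat.Prime p)
    (hineq : ∑ p ∈ P, (p : ℝ) ^ (-t) ≤
      1 + Real.sqrt (1 - ∑ p ∈ P, (p : ℝ) ^ (-(2 * t)))) :
    1 - Real.sqrt (1 - ∑ p ∈ P, (p : ℝ) ^ (-(2 * t))) ≤ ∑ p ∈ P, (p : ℝ) ^ (-t) ∧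
      ∑' n : NkSet ↑P 2, (n : ℝ) ^ (-t) ≤ ∑ p ∈ P, (p : ℝ) ^ (-t) := by
  have hQS : ∑ p ∈ P, (p : ℝ) ^ (-(2 * t)) ≤ ∑ p ∈ P, (p : ℝ) ^ (-t) :=
    Finset.sum_le_sum fun p hp =>
      Real.rpow_le_rpow_of_exponent_le (mod_cast (hP p hp).one_le) (by linarith)
  have hQ₀ : 0 ≤ ∑ p ∈ P, (p : ℝ) ^ (-(2 * t)) :=
    Finset.sum_nonneg fun p _ => Real.rpow_nonneg (Nat.cast_nonneg p) _
  have hQ := le_one_of_le_one_add_sqrt hQS hineq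
  have hlower := one_sub_sqrt_one_sub_le hQ₀ hQ hQS
  refine ⟨hlower, ?_⟩
  have hsquare : ∀ p ∈ P, ((p : ℝ) ^ (-t)) ^ 2 = (p : ℝ) ^ (-(2 * t)) := fun p _ => by
    rw [← Real.rpow_mul_natCast (Nat.cast_nonneg p)]; ring_nf
  have hN2 := two_mul_tsum_NkSet_two_rpow hP (-t)
  rw [Finset.sum_congr rfl hsquare] at hN2
  linarith [sq_add_le_two_mul_of_le_of_le hQ hlower hineq]
end
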